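/- arXiv:1707.02753 — 3 statements merged into one kernel-verified Lean document; each statement's English description precedes it below -/
import Mathlib

section
/- Let A be a feasible tree solution and F a feasible solution with V[A]=V[F]. Let K = {e_1,…,e_l} ⊆ A with l ≥ 2 be a set of pairwise compatible edges all of which are safe. Then there is a path P in A that contains all edges of K. -/
open Finset

attribute [local instance] Classical.propDecidable

variable {V : Type*} [Fintype V] [DecidableEq V]

/-- The simple graph on `V` induced by a finite set of (undirected) edges. -/
def graphOf (F : Finset (Sym2 V)) : SimpleGraph V where
  Adj u v := u ≠ v ∧ s(u, v) ∈ F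
  symm := by
    constructor
    intro u v h
    refine ⟨Ne.symm h.1, ?_⟩
    rw [Sym2.eq_swap]
    exact h.2
  loopless := by constructor; intro v h; exact h.1 rfl

/-- The set of vertices incident to at least one edge of `F` (denoted `V[F]` in the paper). -/
def supp (F : Finset (Sym2 V)) : Set V := {v | ∃ e ∈ F, v ∈ e}

/-- A Steiner forest `F` is feasible for the terminal pairs `T` if it connects every pair. -/
def Feasible (F : Finset (Sym2 V)) (T : Finset (V × V)) : Prop :=
  ∀ p ∈ T, (graphOf F).Reachable p.1 p.2

/-- Total edge cost `d(F)`. -/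
def cost (d : Sym2 V → ℝ) (F : Finset (Sym2 V)) : ℝ := ∑ e ∈ F, d e

/-- `A` is a tree (on its vertex support): loopless edges, acyclic, connected on `V[A]`. -/
def IsTreeSol (A : Finset (Sym2 V)) : Prop :=
  (∀ e ∈ A, ¬ e.IsDiag) ∧ (graphOf A).IsAcyclic ∧
    ∀ u ∈ supp A, ∀ v ∈ supp A, (graphOf A).Reachable u v

/-- Shortest-path distance between `u` and `v` in the graph with edge set `Eall`
and edge lengths `d`. -/
noncomputable def wdist (Eall : Finset (Sym2 V)) (d : Sym2 V → ℝ) (u v : V) : ℝ :=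
  ⨅ p : (graphOf Eall).Walk u v, (p.edges.map d).sum

/-- Width of a vertex set `W`: the largest shortest-path distance of a terminal pair
whose two members both lie in `W`. -/
noncomputable def widthSet (Eall : Finset (Sym2 V)) (d : Sym2 V → ℝ) (T : Finset (V × V))
    (W : Set V) : ℝ :=
  sSup {x : ℝ | ∃ p ∈ T, p.1 ∈ W ∧ p.2 ∈ W ∧ x = wdist Eall d p.1 p.2}

/-- Total width `w(F)`: the sum of the widths of the connected components of `F`. -/
noncomputable def totalWidth (Eall : Finset (Sym2 V)) (d : Sym2 V → ℝ) (T : Finset (V × V))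
    (F : Finset (Sym2 V)) : ℝ :=
  ∑ᶠ c : (graphOf F).ConnectedComponent, widthSet Eall d T c.supp

/-- The potential `φ(F) = d(F) + w(F)`. -/
noncomputable def phi (Eall : Finset (Sym2 V)) (d : Sym2 V → ℝ) (T : Finset (V × V))
    (F : Finset (Sym2 V)) : ℝ :=
  cost d F + totalWidth Eall d T F

/-- Some edge of `F` leaves the vertex set `W`. -/
def leavesSet (F : Finset (Sym2 V)) (W : Set V) : Prop :=
  ∃ g ∈ F, ∃ x y : V, g = s(x, y) ∧ x ∈ W ∧ y ∉ W

/-- `T_{e,f}`: the connected component of `A ∖ {e,f}` containing the interior of the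
unique `e`–`f` path of the tree `A`; equivalently, the component containing an endpoint
of `e` together with an endpoint of `f`. -/
def midComp (A : Finset (Sym2 V)) (e f : Sym2 V) : Set V :=
  {v | ∃ x ∈ e, ∃ y ∈ f,
    (graphOf (A \ {e, f})).Reachable x y ∧ (graphOf (A \ {e, f})).Reachable x v}

/-- `e` and `f` are compatible w.r.t. `F` (`e ~cp f`). -/
def Compatible (A F : Finset (Sym2 V)) (e f : Sym2 V) : Prop :=
  e = f ∨ ¬ leavesSet F (midComp A e f)

/-- `e` is safe: some `F`-edge crosses between the two components of `A ∖ {e}`. -/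
def Safe (A F : Finset (Sym2 V)) (e : Sym2 V) : Prop :=
  ∃ g ∈ F, ∃ x y : V, g = s(x, y) ∧ x ≠ y ∧ ¬ (graphOf (A.erase e)).Reachable x y

/-- `e` is essential: removing it from `A` destroys feasibility. -/
def Essential (A : Finset (Sym2 V)) (T : Finset (V × V)) (e : Sym2 V) : Prop :=
  ¬ Feasible (A.erase e) T

/-- The compatibility class of the edge `e` of `A`. -/
noncomputable def cls (A F : Finset (Sym2 V)) (e : Sym2 V) : Finset (Sym2 V) :=
  A.filter (fun f => Compatible A F e f)

/-- `S_u`: the set of unsafe edges of `A`. -/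
noncomputable def unsafeCls (A F : Finset (Sym2 V)) : Finset (Sym2 V) :=
  A.filter (fun e => ¬ Safe A F e)

/-- `𝔖`: the set of compatibility classes of edges of `A`. -/
noncomputable def classes (A F : Finset (Sym2 V)) : Finset (Finset (Sym2 V)) :=
  A.image (cls A F)

/-- `e` lies on the fundamental cycle closed by adding the edge `f` to the tree `A`. -/
def onFundCycle (A : Finset (Sym2 V)) (f e : Sym2 V) : Prop :=
  e ∈ A ∧ ∀ x y : V, f = s(x, y) →
    (graphOf A).Reachable x y ∧ ¬ (graphOf (A.erase e)).Reachable x y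

/-- Edge/edge swap optimality of `A` w.r.t. added edges from `Eadd` and objective `obj`:
no swap that adds an edge `f ∈ Eadd` and removes one edge of the cycle it closes,
keeping feasibility, strictly decreases the objective. -/
def EdgeEdgeSwapOptimal (Eadd : Finset (Sym2 V)) (T : Finset (V × V))
    (obj : Finset (Sym2 V) → ℝ) (A : Finset (Sym2 V)) : Prop :=
  ∀ f ∈ Eadd, ∀ e, onFundCycle A f e →
    Feasible (A.erase e ∪ {f}) T → obj A ≤ obj (A.erase e ∪ {f})

/-- Edge/set swap optimality of `A` w.r.t. added edges from `Eadd` and objective `obj`: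
no swap that adds an edge `f ∈ Eadd` and removes a set `S` of edges of the cycle it closes,
keeping feasibility, strictly decreases the objective. -/
def EdgeSetSwapOptimal (Eadd : Finset (Sym2 V)) (T : Finset (V × V))
    (obj : Finset (Sym2 V) → ℝ) (A : Finset (Sym2 V)) : Prop :=
  ∀ f ∈ Eadd, ∀ S ⊆ A, (∀ e ∈ S, onFundCycle A f e) →
    Feasible ((A \ S) ∪ {f}) T → obj A ≤ obj ((A \ S) ∪ {f})

/-- Removing swap optimality: deleting any (feasibility preserving) edge set from `A`
does not strictly decrease the objective. -/
def RemovingSwapOptimal (T : Finset (V × V))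
    (obj : Finset (Sym2 V) → ℝ) (A : Finset (Sym2 V)) : Prop :=
  ∀ S ⊆ A, Feasible (A \ S) T → obj A ≤ obj (A \ S)

/-- Path/set swap optimality of `A`: for vertices `u, v` in the same component of `A`,
adding a set `P ⊆ Eadd` of edges (along a `u`–`v` connection) and removing a set `S` of
edges of the component of `u`, in a way that keeps `u,v` connected and the solution
feasible, does not strictly decrease the objective. -/
def PathSetSwapOptimal (Eadd : Finset (Sym2 V)) (T : Finset (V × V))
    (obj : Finset (Sym2 V) → ℝ) (A : Finset (Sym2 V)) : Prop :=
  ∀ u v : V, (graphOf A).Reachable u v →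
    ∀ P : Finset (Sym2 V), P ⊆ Eadd → ∀ S ⊆ A,
      (∀ e ∈ S, ∃ x ∈ e, (graphOf A).Reachable u x) →
      (graphOf ((A \ S) ∪ P)).Reachable u v →
      Feasible ((A \ S) ∪ P) T → obj A ≤ obj ((A \ S) ∪ P)

/-- A connected component `c` of `A ∖ S` is an *inner* component for the class `S`
if it touches (at least) two distinct edges of `S`. -/
def innerComp (A S : Finset (Sym2 V)) (c : (graphOf (A \ S)).ConnectedComponent) : Prop :=
  ∃ e ∈ S, ∃ e' ∈ S, e ≠ e' ∧ (∃ x ∈ e, (graphOf (A \ S)).connectedComponentMk x = c) ∧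
    ∃ y ∈ e', (graphOf (A \ S)).connectedComponentMk y = c

/-- The sum of the widths of the inner components `E_{S,i}`, `i ∈ In_S`, of the class `S`. -/
noncomputable def innerWidthSum (Eall : Finset (Sym2 V)) (d : Sym2 V → ℝ) (T : Finset (V × V))
    (A S : Finset (Sym2 V)) : ℝ :=
  ∑ᶠ c : (graphOf (A \ S)).ConnectedComponent,
    if innerComp A S c then widthSet Eall d T c.supp else 0

/-- `index(E')` for a vertex set `W`: the largest index `i` (in the enumeration `tp` of the
terminal pairs by nondecreasing distance) of a terminal pair lying entirely inside `W`. -/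
noncomputable def idxOf {nt : ℕ} (tp : Fin nt → V × V) (W : Set V) : ℕ :=
  sSup {i : ℕ | ∃ h : i < nt, (tp ⟨i, h⟩).1 ∈ W ∧ (tp ⟨i, h⟩).2 ∈ W}

/-- The finite vertex support of an edge set. -/
def suppF (B : Finset (Sym2 V)) : Finset V :=
  Finset.univ.filter (fun v => ∃ e ∈ B, v ∈ e)

/-- `e` crosses between two different connected components of `A`. -/
def crossingEdge (A : Finset (Sym2 V)) (e : Sym2 V) : Prop :=
  ∀ x y : V, e = s(x, y) → ¬ (graphOf A).Reachable x y

/-- The components of `A` touched by the edge set `B`, i.e. the nodes of `G_A`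
incident to `B`. -/
noncomputable def touched (A B : Finset (Sym2 V)) :
    Finset ((graphOf A).ConnectedComponent) :=
  (suppF B).image ((graphOf A).connectedComponentMk)

/-- `B` is (the edge set of) a tree in the contracted multigraph `G_A`: all its edges cross
between components of `A`, it is connected (through the components of `A` it touches), and
it has one edge less than the number of components it touches. -/
def IsGATree (A B : Finset (Sym2 V)) : Prop :=
  (∀ e ∈ B, crossingEdge A e) ∧ (touched A B).card = B.card + 1 ∧
    ∀ x ∈ suppF B, ∀ y ∈ suppF B, (graphOf (A ∪ B)).Reachable x y

/-- `A` is `c`-approximate connecting move optimal: for every tree `B` in `G_A` (with edges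
taken from `Emoves`), the total width of the components it connects, minus the largest of
these widths, is at most `c` times the length of the tree. -/
def ConnApproxOptimal (Emoves Eall : Finset (Sym2 V)) (d : Sym2 V → ℝ) (T : Finset (V × V))
    (c : ℝ) (A : Finset (Sym2 V)) : Prop :=
  ∀ B ⊆ Emoves, IsGATree A B →
    (∑ t ∈ touched A B, widthSet Eall d T t.supp)
      - (⨆ t ∈ touched A B, widthSet Eall d T t.supp) ≤ c * ∑ e ∈ B, d e

/-!
Call `g ∈ K` a separator of `u, v` if `u` and `v` lie in different components of `A ∖ {g}`,
i.e. if `g` lies on the `u`–`v` path of the tree. Choose `u, v ∈ V[A]` with the largest number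
of separators. If some `e = ab ∈ K`, with `a` on the side of `u`, does not separate them, then
both `(u, b)` and `(b, v)` gain the separator `e`, so they lose separators `g₁` and `g₂`. Then
`e, g₁, g₂` form a star around `a`: each lies in the component of `a` after deleting either of
the others. This is impossible: an `F`-edge crossing the safe edge `g₂` has its far endpoint in
`T_{e,g₁}`, so by `e ~cp g₁` both endpoints lie in `T_{e,g₁}`, whence the near endpoint lies
in `T_{e,g₂}` but the far one does not, contradicting `e ~cp g₂`.
-/

open SimpleGraph

set_option linter.unusedSectionVars false

section Forest

variable {A B C : Finset (Sym2 V)} {e f : Sym2 V} {a b u v x y : V}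

theorem graphOf_mono (h : B ⊆ C) : graphOf B ≤ graphOf C :=
  fun _ _ hadj => ⟨hadj.1, h hadj.2⟩

theorem mem_edgeSet_graphOf : e ∈ (graphOf B).edgeSet ↔ e ∈ B ∧ ¬ e.IsDiag := by
  induction e using Sym2.ind with
  | _ a b => exact and_comm

theorem mem_of_mem_edges (W : (graphOf B).Walk u v) (he : e ∈ W.edges) : e ∈ B :=
  (mem_edgeSet_graphOf.1 (W.edges_subset_edgeSet he)).1

theorem reachable_of_edges_subset (W : (graphOf B).Walk u v) (h : ∀ e ∈ W.edges, e ∈ C) :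
    (graphOf C).Reachable u v :=
  ⟨W.transfer _ fun e he =>
    mem_edgeSet_graphOf.2 ⟨h e he, (mem_edgeSet_graphOf.1 (W.edges_subset_edgeSet he)).2⟩⟩

theorem reachable_of_mem (h : s(a, b) ∈ B) : (graphOf B).Reachable a b := by
  by_cases hab : a = b
  · exact hab ▸ Reachable.refl a
  · exact Adj.reachable ⟨hab, h⟩

theorem mem_edges_of_not_reachable_erase (W : (graphOf B).Walk u v)
    (h : ¬ (graphOf (B.erase e)).Reachable u v) : e ∈ W.edges := by
  by_contra he
  exact h (reachable_of_edges_subset W fun t ht =>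
    mem_erase.2 ⟨fun hte => he (hte ▸ ht), mem_of_mem_edges W ht⟩)

theorem reachable_erase_of_not_reachable (hxy : (graphOf B).Reachable x y)
    (he : ∀ z ∈ e, ¬ (graphOf B).Reachable x z) : (graphOf (B.erase e)).Reachable x y := by
  obtain ⟨W⟩ := hxy
  refine reachable_of_edges_subset W fun t ht => mem_erase.2 ⟨?_, mem_of_mem_edges W ht⟩
  rintro rfl
  induction t using Sym2.ind with
  | _ a b =>
    exact he a (Sym2.mem_mk_left a b) ⟨W.takeUntil a (W.fst_mem_support_of_mem_edges ht)⟩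

theorem reachable_erase_left_or_right (h : (graphOf B).Reachable v a) :
    (graphOf (B.erase s(a, b))).Reachable v a ∨ (graphOf (B.erase s(a, b))).Reachable v b := by
  obtain ⟨W⟩ := h
  induction W with
  | nil => exact Or.inl .rfl
  | @cons u w c huw W ih =>
    by_cases he : s(u, w) = s(c, b)
    · rcases Sym2.eq_iff.1 he with ⟨rfl, -⟩ | ⟨rfl, -⟩
      exacts [Or.inl .rfl, Or.inr .rfl]
    · have huw' : (graphOf (B.erase s(c, b))).Reachable u w :=
        Adj.reachable ⟨huw.1, mem_erase.2 ⟨he, huw.2⟩⟩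
      exact ih.imp huw'.trans huw'.trans

theorem reachable_iff_edges_subset (hac : (graphOf A).IsAcyclic) (hC : C ⊆ A)
    (p : (graphOf A).Path u v) : (graphOf C).Reachable u v ↔ ∀ e ∈ p.1.edges, e ∈ C := by
  refine ⟨fun ⟨W⟩ e he => ?_, reachable_of_edges_subset p.1⟩
  have := hac.subsingleton_path u v
  rw [Subsingleton.elim p (W.mapLe (graphOf_mono hC)).toPath] at he
  have he' := (W.mapLe (graphOf_mono hC)).edges_toPath_subset_edges he
  rw [Walk.edges_mapLe_eq_edges] at he'
  exact mem_of_mem_edges W he'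

theorem not_reachable_erase_self (hac : (graphOf A).IsAcyclic) (hab : a ≠ b) (h : s(a, b) ∈ A) :
    ¬ (graphOf (A.erase s(a, b))).Reachable a b := fun hr =>
  (mem_erase.1 ((reachable_iff_edges_subset hac (erase_subset _ A)
    (Path.singleton (G := graphOf A) ⟨hab, h⟩)).1 hr _ (Path.mk'_mem_edges_singleton _))).1 rfl

theorem reachable_sdiff_pair (hac : (graphOf A).IsAcyclic)
    (he : (graphOf (A.erase e)).Reachable u v) (hf : (graphOf (A.erase f)).Reachable u v) :
    (graphOf (A \ {e, f})).Reachable u v := by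
  obtain ⟨W⟩ := he.mono (graphOf_mono (erase_subset e A))
  have he' := (reachable_iff_edges_subset hac (erase_subset e A) W.toPath).1 he
  have hf' := (reachable_iff_edges_subset hac (erase_subset f A) W.toPath).1 hf
  refine (reachable_iff_edges_subset hac sdiff_subset W.toPath).2 fun t ht => ?_
  obtain ⟨hte, htA⟩ := mem_erase.1 (he' t ht)
  simpa [hte, htA] using (mem_erase.1 (hf' t ht)).1

end Forest

section Tree

variable {A : Finset (Sym2 V)} {e f g : Sym2 V} {m q w x y : V}

theorem mem_suppF : x ∈ suppF A ↔ x ∈ supp A := by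
  simp [suppF, supp]

theorem exists_mem_reachable_erase
    (hconn : ∀ u ∈ supp A, ∀ v ∈ supp A, (graphOf A).Reachable u v)
    (hm : m ∈ supp A) (he : e ∈ A) : ∃ z ∈ e, (graphOf (A.erase e)).Reachable m z := by
  induction e using Sym2.ind with
  | _ a b =>
    rcases reachable_erase_left_or_right (b := b) (hconn m hm a ⟨_, he, Sym2.mem_mk_left a b⟩)
      with h | h
    exacts [⟨a, Sym2.mem_mk_left a b, h⟩, ⟨b, Sym2.mem_mk_right a b, h⟩]

theorem reachable_erase_of_both_not_reachable_erase
    (hconn : ∀ u ∈ supp A, ∀ v ∈ supp A, (graphOf A).Reachable u v) (hg : g ∈ A)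
    (hm : m ∈ supp A) (hx : x ∈ supp A) (hy : y ∈ supp A)
    (hmx : ¬ (graphOf (A.erase g)).Reachable m x) (hmy : ¬ (graphOf (A.erase g)).Reachable m y) :
    (graphOf (A.erase g)).Reachable x y := by
  induction g using Sym2.ind with
  | _ a b =>
    have side : ∀ z ∈ supp A, (graphOf (A.erase s(a, b))).Reachable z a ∨
        (graphOf (A.erase s(a, b))).Reachable z b := fun z hz =>
      reachable_erase_left_or_right (hconn z hz a ⟨_, hg, Sym2.mem_mk_left a b⟩)
    rcases side m hm with hm' | hm' <;> rcases side x hx with hx' | hx' <;>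
      rcases side y hy with hy' | hy' <;>
      first
      | exact hx'.trans hy'.symm
      | exact absurd (hm'.trans hx'.symm) hmx
      | exact absurd (hm'.trans hy'.symm) hmy

/-- `OnSide A m g e`: the edge `e` lies in the component of `A ∖ {g}` containing `m`. -/
def OnSide (A : Finset (Sym2 V)) (m : V) (g e : Sym2 V) : Prop :=
  ∀ z ∈ e, (graphOf (A.erase g)).Reachable m z

theorem OnSide.of_reachable (hmq : (graphOf (A.erase g)).Reachable m q) (h : OnSide A q g e) :
    OnSide A m g e :=
  fun z hz => hmq.trans (h z hz)

theorem onSide_of_mem (he : e ∈ A) (hne : e ≠ g) (hm : m ∈ e) : OnSide A m g e := by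
  induction e using Sym2.ind with
  | _ a b =>
    have hab : (graphOf (A.erase g)).Reachable a b := reachable_of_mem (mem_erase.2 ⟨hne, he⟩)
    intro z hz
    rcases Sym2.mem_iff.1 hm with rfl | rfl <;> rcases Sym2.mem_iff.1 hz with rfl | rfl
    exacts [.rfl, hab, hab.symm, .rfl]

theorem onSide_of_not_reachable_erase (hg : g ∈ A) (hne : g ≠ e)
    (hqw : (graphOf (A.erase e)).Reachable q w) (hsep : ¬ (graphOf (A.erase g)).Reachable q w) :
    OnSide A q e g := by
  obtain ⟨z, hz, hqz⟩ : ∃ z ∈ g, (graphOf (A.erase e)).Reachable q z := by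
    by_contra! hfar
    exact hsep ((reachable_erase_of_not_reachable hqw hfar).mono
      (graphOf_mono (erase_subset_erase g (erase_subset e A))))
  exact OnSide.of_reachable hqz (onSide_of_mem hg hne hz)

theorem reachable_erase_of_onSide_of_not_reachable_erase
    (hconn : ∀ u ∈ supp A, ∀ v ∈ supp A, (graphOf A).Reachable u v) (hg : g ∈ A)
    (heg : OnSide A m e g) (hge : OnSide A m g e) (hx : x ∈ supp A)
    (hmx : ¬ (graphOf (A.erase g)).Reachable m x) : (graphOf (A.erase e)).Reachable m x := by
  obtain ⟨z, hz, hxz⟩ := exists_mem_reachable_erase hconn hx hg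
  have hxz' := reachable_erase_of_not_reachable hxz fun z' hz' hxz' =>
    hmx ((hge z' hz').trans hxz'.symm)
  exact (heg z hz).trans (hxz'.mono (graphOf_mono (erase_subset_erase e (erase_subset g A)))).symm

theorem sdiff_pair_subset_erase_left : A \ {e, f} ⊆ A.erase e := by
  intro t ht
  simp_all

theorem sdiff_pair_subset_erase_right : A \ {e, f} ⊆ A.erase f := by
  intro t ht
  simp_all

theorem reachable_erase_left_of_mem_midComp (hfe : OnSide A m e f) (hv : x ∈ midComp A e f) :
    (graphOf (A.erase e)).Reachable m x := by
  obtain ⟨z, -, w, hw, hzw, hzx⟩ := hv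
  have hle := graphOf_mono (sdiff_pair_subset_erase_left (A := A) (e := e) (f := f))
  exact (hfe w hw).trans ((hzw.mono hle).symm.trans (hzx.mono hle))

theorem reachable_erase_right_of_mem_midComp (hef : OnSide A m f e) (hv : x ∈ midComp A e f) :
    (graphOf (A.erase f)).Reachable m x := by
  obtain ⟨z, hz, -, -, -, hzx⟩ := hv
  exact (hef z hz).trans (hzx.mono (graphOf_mono sdiff_pair_subset_erase_right))

theorem mem_midComp_of_onSide (hac : (graphOf A).IsAcyclic)
    (hconn : ∀ u ∈ supp A, ∀ v ∈ supp A, (graphOf A).Reachable u v)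
    (he : e ∈ A) (hf : f ∈ A) (hm : m ∈ supp A) (hfe : OnSide A m e f) (hef : OnSide A m f e)
    (hxe : (graphOf (A.erase e)).Reachable m x) (hxf : (graphOf (A.erase f)).Reachable m x) :
    x ∈ midComp A e f := by
  obtain ⟨z, hz, hmz⟩ := exists_mem_reachable_erase hconn hm he
  obtain ⟨w, hw, hmw⟩ := exists_mem_reachable_erase hconn hm hf
  exact ⟨z, hz, w, hw, reachable_sdiff_pair hac (hmz.symm.trans (hfe w hw))
    ((hef z hz).symm.trans hmw), reachable_sdiff_pair hac (hmz.symm.trans hxe)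
    ((hef z hz).symm.trans hxf)⟩

end Tree

section Steiner

variable {A F K : Finset (Sym2 V)} {e f g : Sym2 V} {a b m q w : V}

theorem false_of_onSide_of_compatible_of_safe (hac : (graphOf A).IsAcyclic)
    (hconn : ∀ u ∈ supp A, ∀ v ∈ supp A, (graphOf A).Reachable u v)
    (hsupp : supp A = supp F) (hm : m ∈ supp A) (he : e ∈ A) (hf : f ∈ A) (hg : g ∈ A)
    (hef : e ≠ f) (heg : e ≠ g)
    (hsef : OnSide A m e f ∧ OnSide A m f e) (hseg : OnSide A m e g ∧ OnSide A m g e)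
    (hsfg : OnSide A m f g ∧ OnSide A m g f)
    (hcef : Compatible A F e f) (hceg : Compatible A F e g) (hsafe : Safe A F g) : False := by
  obtain ⟨-, hF, x₀, y₀, rfl, -, hxy₀⟩ := hsafe
  have hx₀ : x₀ ∈ supp A := hsupp ▸ ⟨_, hF, Sym2.mem_mk_left x₀ y₀⟩
  have hy₀ : y₀ ∈ supp A := hsupp ▸ ⟨_, hF, Sym2.mem_mk_right x₀ y₀⟩
  obtain ⟨x, y, hxyF, hx, hmx, hmy⟩ : ∃ x y, s(x, y) ∈ F ∧ x ∈ supp A ∧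
      ¬ (graphOf (A.erase g)).Reachable m x ∧ (graphOf (A.erase g)).Reachable m y := by
    by_cases hmx₀ : (graphOf (A.erase g)).Reachable m x₀
    · exact ⟨y₀, x₀, Sym2.eq_swap ▸ hF, hy₀, fun h => hxy₀ (hmx₀.symm.trans h), hmx₀⟩
    · by_cases hmy₀ : (graphOf (A.erase g)).Reachable m y₀
      · exact ⟨x₀, y₀, hF, hx₀, hmx₀, hmy₀⟩
      · exact absurd
          (reachable_erase_of_both_not_reachable_erase hconn hg hm hx₀ hy₀ hmx₀ hmy₀) hxy₀
  have hxT : x ∈ midComp A e f := mem_midComp_of_onSide hac hconn he hf hm hsef.1 hsef.2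
    (reachable_erase_of_onSide_of_not_reachable_erase hconn hg hseg.1 hseg.2 hx hmx)
    (reachable_erase_of_onSide_of_not_reachable_erase hconn hg hsfg.1 hsfg.2 hx hmx)
  have hyT : y ∈ midComp A e f := by
    by_contra hyT
    exact hcef.elim hef fun hleave => hleave ⟨_, hxyF, x, y, rfl, hxT, hyT⟩
  have hyT' : y ∈ midComp A e g := mem_midComp_of_onSide hac hconn he hg hm hseg.1 hseg.2
    (reachable_erase_left_of_mem_midComp hsef.1 hyT) hmy
  have hxT' : x ∉ midComp A e g := fun h => hmx (reachable_erase_right_of_mem_midComp hseg.2 h)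
  exact hceg.elim heg fun hleave => hleave ⟨_, hxyF, y, x, Sym2.eq_swap, hyT', hxT'⟩

/-- The edges of `K` on the path of the tree `A` between `u` and `v`. -/
noncomputable def separators (A K : Finset (Sym2 V)) (u v : V) : Finset (Sym2 V) :=
  K.filter fun e => ¬ (graphOf (A.erase e)).Reachable u v

theorem separators_ssubset_or (hA : IsTreeSol A) (hsupp : supp A = supp F) (hKA : K ⊆ A)
    (hKcomp : ∀ e ∈ K, ∀ f ∈ K, Compatible A F e f) (hKsafe : ∀ e ∈ K, Safe A F e)
    (hab : s(a, b) ∈ K) (hqw : (graphOf (A.erase s(a, b))).Reachable q w)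
    (hqa : (graphOf (A.erase s(a, b))).Reachable q a) :
    separators A K q w ⊂ separators A K q b ∨ separators A K q w ⊂ separators A K b w := by
  obtain ⟨hnd, hac, hconn⟩ := hA
  have habA := hKA hab
  have hqb : ¬ (graphOf (A.erase s(a, b))).Reachable q b := fun hqb =>
    not_reachable_erase_self hac (fun h => hnd _ habA (Sym2.mk_isDiag_iff.2 h)) habA
      (hqa.symm.trans hqb)
  have hbw : ¬ (graphOf (A.erase s(a, b))).Reachable b w := fun hbw => hqb (hqw.trans hbw.symm)
  have hlose : ∀ {u v : V}, ¬ (graphOf (A.erase s(a, b))).Reachable u v →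
      ¬ separators A K q w ⊂ separators A K u v →
      ∃ g ∈ K, ¬ (graphOf (A.erase g)).Reachable q w ∧
        (graphOf (A.erase g)).Reachable u v := by
    intro u v huv hnot
    obtain ⟨g, hg, hg'⟩ := not_subset.1 fun hsub => hnot ((ssubset_iff_of_subset hsub).2
      ⟨_, mem_filter.2 ⟨hab, huv⟩, fun h => (mem_filter.1 h).2 hqw⟩)
    simp only [separators, mem_filter, not_and, not_not] at hg hg'
    exact ⟨g, hg.1, hg.2, hg' hg.1⟩
  by_contra! hcon
  obtain ⟨g₁, hg₁K, hqw₁, hqb₁⟩ := hlose hqb hcon.1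
  obtain ⟨g₂, hg₂K, hqw₂, hbw₂⟩ := hlose hbw hcon.2
  have hne₁ : s(a, b) ≠ g₁ := by rintro rfl; exact hqw₁ hqw
  have hne₂ : s(a, b) ≠ g₂ := by rintro rfl; exact hqw₂ hqw
  have hne₁₂ : g₁ ≠ g₂ := by rintro rfl; exact hqw₁ (hqb₁.trans hbw₂)
  have hab₁ : (graphOf (A.erase g₁)).Reachable a b :=
    reachable_of_mem (mem_erase.2 ⟨hne₁, habA⟩)
  have hab₂ : (graphOf (A.erase g₂)).Reachable a b :=
    reachable_of_mem (mem_erase.2 ⟨hne₂, habA⟩)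
  have hs₁ : OnSide A a s(a, b) g₁ := OnSide.of_reachable hqa.symm
    (onSide_of_not_reachable_erase (hKA hg₁K) hne₁.symm hqw hqw₁)
  have hs₂ : OnSide A a s(a, b) g₂ := OnSide.of_reachable hqa.symm
    (onSide_of_not_reachable_erase (hKA hg₂K) hne₂.symm hqw hqw₂)
  have hs₁₂ : OnSide A a g₁ g₂ := OnSide.of_reachable (hqb₁.trans hab₁.symm).symm
    (onSide_of_not_reachable_erase (hKA hg₂K) hne₁₂.symm hqb₁ fun h =>
      hqw₂ (h.trans hbw₂))
  have hs₂₁ : OnSide A a g₂ g₁ := OnSide.of_reachable hab₂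
    (onSide_of_not_reachable_erase (hKA hg₁K) hne₁₂ hbw₂ fun h => hqw₁ (hqb₁.trans h))
  exact false_of_onSide_of_compatible_of_safe hac hconn hsupp ⟨_, habA, Sym2.mem_mk_left a b⟩
    habA (hKA hg₁K) (hKA hg₂K) hne₁ hne₂
    ⟨hs₁, onSide_of_mem habA hne₁ (Sym2.mem_mk_left a b)⟩
    ⟨hs₂, onSide_of_mem habA hne₂ (Sym2.mem_mk_left a b)⟩ ⟨hs₁₂, hs₂₁⟩
    (hKcomp _ hab _ hg₁K) (hKcomp _ hab _ hg₂K) (hKsafe _ hg₂K)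

end Steiner

theorem stmt6_compatible_on_path_general
    (A F : Finset (Sym2 V))
    (hAtree : IsTreeSol A) (hsupp : supp A = supp F)
    (K : Finset (Sym2 V)) (hKA : K ⊆ A) (hKcard : 2 ≤ K.card)
    (hKcomp : ∀ e ∈ K, ∀ f ∈ K, Compatible A F e f)
    (hKsafe : ∀ e ∈ K, Safe A F e) :
    ∃ (u v : V) (p : (graphOf A).Walk u v), p.IsPath ∧ ∀ e ∈ K, e ∈ p.edges := by
  obtain ⟨e₀, he₀⟩ := card_pos.1 (by omega : 0 < K.card)
  obtain ⟨z₀, hz₀⟩ : ∃ z, z ∈ suppF A := ⟨_, mem_suppF.2 ⟨e₀, hKA he₀, e₀.out_fst_mem⟩⟩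
  obtain ⟨⟨q, w⟩, hqw, hmax⟩ := exists_max_image (suppF A ×ˢ suppF A)
    (fun p => (separators A K p.1 p.2).card) ⟨(z₀, z₀), mem_product.2 ⟨hz₀, hz₀⟩⟩
  obtain ⟨hq, hw⟩ := mem_product.1 hqw
  have hsep : ∀ e ∈ K, ¬ (graphOf (A.erase e)).Reachable q w := by
    intro e he hqwe
    obtain ⟨a, ha, hqa⟩ := exists_mem_reachable_erase hAtree.2.2 (mem_suppF.1 hq) (hKA he)
    obtain ⟨b, rfl⟩ := Sym2.mem_iff_exists.1 ha
    have hb : b ∈ suppF A := mem_suppF.2 ⟨_, hKA he, Sym2.mem_mk_right a b⟩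
    rcases separators_ssubset_or hAtree hsupp hKA hKcomp hKsafe he hqwe hqa with hlt | hlt
    · exact (hmax (q, b) (mem_product.2 ⟨hq, hb⟩)).not_gt (card_lt_card hlt)
    · exact (hmax (b, w) (mem_product.2 ⟨hb, hw⟩)).not_gt (card_lt_card hlt)
  obtain ⟨W⟩ := hAtree.2.2 q (mem_suppF.1 hq) w (mem_suppF.1 hw)
  exact ⟨q, w, W.toPath, W.toPath.2, fun e he => mem_edges_of_not_reachable_erase _ (hsep e he)⟩

theorem stmt6_compatible_on_path
    (T : Finset (V × V)) (A F : Finset (Sym2 V))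
    (hAfeas : Feasible A T) (hFfeas : Feasible F T)
    (hAtree : IsTreeSol A) (hsupp : supp A = supp F)
    (K : Finset (Sym2 V)) (hKA : K ⊆ A) (hKcard : 2 ≤ K.card)
    (hKcomp : ∀ e ∈ K, ∀ f ∈ K, Compatible A F e f)
    (hKsafe : ∀ e ∈ K, Safe A F e) :
    ∃ (u v : V) (p : (graphOf A).Walk u v), p.IsPath ∧ ∀ e ∈ K, e ∈ p.edges :=
  stmt6_compatible_on_path_general A F hAtree hsupp K hKA hKcard hKcomp hKsafe
end

section
/- Let A be a feasible tree solution and F a feasible solution with V[A]=V[F]. Let S be an equivalence class of ~cp, let e ∈ S, and let f ∈ F be such that A∖{e}∪{f} is feasible. Then A∖S'∪{f} is feasible for every subset S' ⊆ S. -/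
open Finset

attribute [local instance] Classical.propDecidable

variable {V : Type*} [Fintype V] [DecidableEq V]

/-!
For `g` compatible with `e₀` no `F`-edge leaves `T_{e₀,g}`, so the two vertices of a terminal pair,
and the two endpoints of `f`, lie both inside or both outside `T_{e₀,g}`. A connection in `A - e₀`
between two vertices on the same side of `T_{e₀,g}` never uses `g`: otherwise both endpoints of `g`
would lie in `T_{e₀,g}`, which is connected without `e₀` and `g`, and `g` would close a cycle. So
such connections survive the removal of the whole class. A connection of `A - e₀ + f` that needs
`f` joins vertices that are not connected in `A - e₀`, and these lie outside every `T_{e₀,g}`.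
-/

section

omit [Fintype V]

omit [DecidableEq V] in
lemma graphOf_mono_s7 {E E' : Finset (Sym2 V)} (h : E ⊆ E') : graphOf E ≤ graphOf E' :=
  fun _ _ hadj => ⟨hadj.1, h hadj.2⟩

lemma graphOf_erase (E : Finset (Sym2 V)) (e : Sym2 V) :
    graphOf (E.erase e) = (graphOf E).deleteEdges {e} := by
  ext u v
  simp only [graphOf, SimpleGraph.deleteEdges_adj, Finset.mem_erase, Set.mem_singleton_iff]
  tauto

lemma reachable_of_mem_of_mem {E : Finset (Sym2 V)} {e : Sym2 V} (he : e ∈ E) {x y : V}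
    (hx : x ∈ e) (hy : y ∈ e) : (graphOf E).Reachable x y := by
  by_cases hxy : x = y
  · exact hxy ▸ .rfl
  · obtain rfl := (Sym2.mem_and_mem_iff hxy).1 ⟨hx, hy⟩
    exact SimpleGraph.Adj.reachable ⟨hxy, he⟩

lemma not_reachable_erase_of_isAcyclic {A : Finset (Sym2 V)} (hac : (graphOf A).IsAcyclic)
    {e : Sym2 V} (he : e ∈ A) {x y : V} (hx : x ∈ e) (hy : y ∈ e) (hxy : x ≠ y) :
    ¬ (graphOf (A.erase e)).Reachable x y := by
  obtain rfl := (Sym2.mem_and_mem_iff hxy).1 ⟨hx, hy⟩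
  rw [graphOf_erase]
  exact SimpleGraph.isAcyclic_iff_forall_adj_isBridge.1 hac ⟨hxy, he⟩

lemma reachable_erase_or {E : Finset (Sym2 V)} (e : Sym2 V) {u v : V}
    (h : (graphOf E).Reachable u v) :
    (graphOf (E.erase e)).Reachable u v ∨
      ∃ x y, s(x, y) = e ∧ (graphOf (E.erase e)).Reachable u x ∧
        (graphOf (E.erase e)).Reachable y v := by
  obtain ⟨w⟩ := h
  induction w with
  | nil => exact .inl .rfl
  | @cons a b c hadj _ ih =>
    by_cases hab : s(a, b) = e
    · refine ih.elim (fun hbc => .inr ⟨a, b, hab, .rfl, hbc⟩) ?_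
      rintro ⟨x, y, rfl, hbx, hyc⟩
      rcases Sym2.eq_iff.1 hab with ⟨rfl, rfl⟩ | ⟨rfl, rfl⟩
      · exact .inr ⟨a, b, rfl, .rfl, hyc⟩
      · exact .inl hyc
    · have hadj' : (graphOf (E.erase e)).Adj a b := ⟨hadj.1, Finset.mem_erase.2 ⟨hab, hadj.2⟩⟩
      refine ih.imp hadj'.reachable.trans ?_
      rintro ⟨x, y, hxy, hbx, hyc⟩
      exact ⟨x, y, hxy, hadj'.reachable.trans hbx, hyc⟩

lemma reachable_union_singleton_or {E : Finset (Sym2 V)} {f : Sym2 V} {u v : V}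
    (h : (graphOf (E ∪ {f})).Reachable u v) :
    (graphOf E).Reachable u v ∨
      ∃ x y, s(x, y) = f ∧ (graphOf E).Reachable u x ∧ (graphOf E).Reachable y v := by
  have hle := graphOf_mono_s7 (Finset.union_singleton f E ▸ Finset.erase_insert_subset f E)
  refine (reachable_erase_or f h).imp (·.mono hle) ?_
  rintro ⟨x, y, hxy, hux, hyv⟩
  exact ⟨x, y, hxy, hux.mono hle, hyv.mono hle⟩

lemma exists_mem_reachable_erase_s7 {E : Finset (Sym2 V)} {e : Sym2 V} {u v : V}
    (h : (graphOf E).Reachable u v) (hv : v ∈ e) :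
    ∃ y ∈ e, (graphOf (E.erase e)).Reachable u y := by
  rcases reachable_erase_or e h with huv | ⟨x, y, rfl, hux, -⟩
  exacts [⟨v, hv, huv⟩, ⟨x, Sym2.mem_mk_left x y, hux⟩]

omit [DecidableEq V] in
lemma mem_iff_mem_of_not_leavesSet {F : Finset (Sym2 V)} {W : Set V} (h : ¬ leavesSet F W)
    {u v : V} (huv : (graphOf F).Reachable u v) : u ∈ W ↔ v ∈ W := by
  have hstep : ∀ x y, s(x, y) ∈ F → x ∈ W → y ∈ W :=
    fun x y hxy hx => by_contra fun hy => h ⟨_, hxy, x, y, rfl, hx, hy⟩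
  obtain ⟨w⟩ := huv
  induction w with
  | nil => rfl
  | cons hadj _ ih =>
    exact (Iff.intro (hstep _ _ hadj.2) (hstep _ _ (Sym2.eq_swap ▸ hadj.2))).trans ih

lemma sdiff_pair_eq_erase_erase (A : Finset (Sym2 V)) (e g : Sym2 V) :
    A \ {e, g} = (A.erase e).erase g := by
  rw [Finset.sdiff_insert, Finset.sdiff_singleton_eq_erase, Finset.erase_right_comm]

lemma mem_midComp_of_reachable {A : Finset (Sym2 V)} {e g : Sym2 V} {w w' : V}
    (hw : w ∈ midComp A e g) (hww' : (graphOf (A \ {e, g})).Reachable w w') :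
    w' ∈ midComp A e g := by
  obtain ⟨x, hx, y, hy, hxy, hxw⟩ := hw
  exact ⟨x, hx, y, hy, hxy, hxw.trans hww'⟩

/-- Vertices of `T_{e,g}` reached from different endpoints of `e` would close a cycle with `e`. -/
lemma midComp_reachable {A : Finset (Sym2 V)} (hac : (graphOf A).IsAcyclic) {e g : Sym2 V}
    (he : e ∈ A) (hg : g ∈ A) (hge : g ≠ e) {w w' : V}
    (hw : w ∈ midComp A e g) (hw' : w' ∈ midComp A e g) :
    (graphOf (A \ {e, g})).Reachable w w' := by
  obtain ⟨x, hx, y, hy, hxy, hxw⟩ := hw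
  obtain ⟨x', hx', y', hy', hxy', hxw'⟩ := hw'
  have hle : graphOf (A \ {e, g}) ≤ graphOf (A.erase e) :=
    graphOf_mono_s7 (sdiff_pair_eq_erase_erase A e g ▸ Finset.erase_subset _ _)
  have hyy' : (graphOf (A.erase e)).Reachable y y' :=
    reachable_of_mem_of_mem (Finset.mem_erase.2 ⟨hge, hg⟩) hy hy'
  obtain rfl : x = x' := by
    by_contra hxx'
    exact not_reachable_erase_of_isAcyclic hac he hx hx' hxx'
      (((hxy.mono hle).trans hyy').trans (hxy'.mono hle).symm)
  exact hxw.symm.trans hxw'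

lemma exists_mem_midComp {A : Finset (Sym2 V)}
    (hconn : ∀ u ∈ supp A, ∀ v ∈ supp A, (graphOf A).Reachable u v) {e g : Sym2 V}
    (he : e ∈ A) (hg : g ∈ A) : ∃ y ∈ g, y ∈ midComp A e g := by
  obtain ⟨x, hx, hxg⟩ := exists_mem_reachable_erase_s7
    (hconn _ ⟨g, hg, g.out_fst_mem⟩ _ ⟨e, he, e.out_fst_mem⟩) e.out_fst_mem
  obtain ⟨y, hy, hxy⟩ := exists_mem_reachable_erase_s7 hxg.symm g.out_fst_mem
  rw [← sdiff_pair_eq_erase_erase] at hxy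
  exact ⟨y, hy, x, hx, y, hy, hxy, hxy⟩

lemma notMem_midComp_of_not_reachable {A : Finset (Sym2 V)} (hac : (graphOf A).IsAcyclic)
    {e g : Sym2 V} (he : e ∈ A) (hg : g ∈ A) (hge : g ≠ e) {u v : V}
    (huv : u ∈ midComp A e g ↔ v ∈ midComp A e g)
    (hnot : ¬ (graphOf (A.erase e)).Reachable u v) :
    u ∉ midComp A e g ∧ v ∉ midComp A e g := by
  have hle : graphOf (A \ {e, g}) ≤ graphOf (A.erase e) :=
    graphOf_mono_s7 (sdiff_pair_eq_erase_erase A e g ▸ Finset.erase_subset _ _)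
  have hu : u ∉ midComp A e g := fun hu =>
    hnot ((midComp_reachable hac he hg hge hu (huv.1 hu)).mono hle)
  exact ⟨hu, huv.not.1 hu⟩

lemma mem_midComp_iff_of_mem_cls {A F : Finset (Sym2 V)} {e g : Sym2 V} (hg : g ∈ cls A F e)
    (hge : g ≠ e) {u v : V} (huv : (graphOf F).Reachable u v) :
    u ∈ midComp A e g ↔ v ∈ midComp A e g :=
  mem_iff_mem_of_not_leavesSet ((Finset.mem_filter.1 hg).2.resolve_left hge.symm) huv

lemma notMem_midComp_of_mem_cls {A F : Finset (Sym2 V)} (hac : (graphOf A).IsAcyclic)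
    {e g : Sym2 V} (he : e ∈ A) (hg : g ∈ cls A F e) (hge : g ≠ e) {u v : V}
    (huv : (graphOf F).Reachable u v) (hnot : ¬ (graphOf (A.erase e)).Reachable u v) :
    u ∉ midComp A e g ∧ v ∉ midComp A e g :=
  notMem_midComp_of_not_reachable hac he (Finset.mem_filter.1 hg).1 hge
    (mem_midComp_iff_of_mem_cls hg hge huv) hnot

/-- If a connection avoiding `e` used `g`, one endpoint of `g` would lie in `T_{e,g}`, so the
whole connection would, and then `T_{e,g}` would join the endpoints of `g` without `g`. -/
lemma reachable_erase_of_mem_midComp_iff {A : Finset (Sym2 V)} (hA : IsTreeSol A)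
    {e g : Sym2 V} (he : e ∈ A) (hg : g ∈ A) (hge : g ≠ e) {B : Finset (Sym2 V)}
    (hB : B ⊆ A.erase e) {u v : V} (hr : (graphOf B).Reachable u v)
    (huv : u ∈ midComp A e g ↔ v ∈ midComp A e g) :
    (graphOf (B.erase g)).Reachable u v := by
  obtain ⟨-, hac, hconn⟩ := hA
  rcases reachable_erase_or g hr with huv' | ⟨c, d, rfl, huc, hdv⟩
  · exact huv'
  by_cases hcd : c = d
  · exact huc.trans (hcd ▸ hdv)
  have hle : graphOf (B.erase s(c, d)) ≤ graphOf (A \ {e, s(c, d)}) :=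
    graphOf_mono_s7 (sdiff_pair_eq_erase_erase A e _ ▸ Finset.erase_subset_erase _ hB)
  replace huc := huc.mono hle
  replace hdv := hdv.mono hle
  have hT : c ∈ midComp A e s(c, d) ∧ d ∈ midComp A e s(c, d) := by
    obtain ⟨y, hy, hyT⟩ := exists_mem_midComp hconn he hg
    rcases Sym2.mem_iff.1 hy with rfl | rfl
    · have hv := huv.1 (mem_midComp_of_reachable hyT huc.symm)
      exact ⟨hyT, mem_midComp_of_reachable hv hdv.symm⟩
    · have hu := huv.2 (mem_midComp_of_reachable hyT hdv)
      exact ⟨mem_midComp_of_reachable hu huc, hyT⟩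
  have hle' : graphOf (A \ {e, s(c, d)}) ≤ graphOf (A.erase s(c, d)) := graphOf_mono_s7 <| by
    rw [sdiff_pair_eq_erase_erase, Finset.erase_right_comm]; exact Finset.erase_subset _ _
  exact (not_reachable_erase_of_isAcyclic hac hg (Sym2.mem_mk_left c d) (Sym2.mem_mk_right c d)
    hcd ((midComp_reachable hac he hg hge hT.1 hT.2).mono hle')).elim

lemma reachable_sdiff_of_mem_midComp_iff {A : Finset (Sym2 V)} (hA : IsTreeSol A)
    {e : Sym2 V} (he : e ∈ A) {S : Finset (Sym2 V)} (hSA : S ⊆ A) {u v : V}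
    (hr : (graphOf (A.erase e)).Reachable u v)
    (huv : ∀ g ∈ S, g ≠ e → (u ∈ midComp A e g ↔ v ∈ midComp A e g)) :
    (graphOf (A.erase e \ S)).Reachable u v := by
  induction S using Finset.induction_on with
  | empty => simpa using hr
  | insert g S _ ih =>
    replace ih := ih ((Finset.subset_insert g S).trans hSA)
      fun g' hg' => huv g' (Finset.mem_insert_of_mem hg')
    rw [Finset.sdiff_insert]
    by_cases hge : g = e
    · subst hge
      rwa [Finset.erase_eq_of_notMem (by simp)]
    exact reachable_erase_of_mem_midComp_iff hA he (hSA (Finset.mem_insert_self g S)) hge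
      Finset.sdiff_subset ih (huv g (Finset.mem_insert_self g S) hge)

end

theorem stmt7_class_all_or_nothing_general
    (T : Finset (V × V)) (A F : Finset (Sym2 V))
    (hFfeas : Feasible F T)
    (hAtree : IsTreeSol A)
    (e₀ : Sym2 V) (he₀ : e₀ ∈ A)
    (S : Finset (Sym2 V)) (hS : S = cls A F e₀)
    (f : Sym2 V) (hf : f ∈ F)
    (hfeas : Feasible (A.erase e₀ ∪ {f}) T) :
    ∀ S' ⊆ S, Feasible ((A \ S') ∪ {f}) T := by
  rintro S' hS' ⟨s, t⟩ hst
  subst hS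
  have hlift : ∀ {x y}, (graphOf (A.erase e₀)).Reachable x y →
      (∀ g ∈ S', g ≠ e₀ → (x ∈ midComp A e₀ g ↔ y ∈ midComp A e₀ g)) →
      (graphOf ((A \ S') ∪ {f})).Reachable x y := fun hxy hT =>
    (reachable_sdiff_of_mem_midComp_iff hAtree he₀ (hS'.trans (Finset.filter_subset _ _)) hxy
      hT).mono <| graphOf_mono_s7 <| (Finset.sdiff_subset_sdiff (Finset.erase_subset _ _)
        le_rfl).trans Finset.subset_union_left
  by_cases hst' : (graphOf (A.erase e₀)).Reachable s t
  · exact hlift hst' fun g hg hge => mem_midComp_iff_of_mem_cls (hS' hg) hge (hFfeas _ hst)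
  obtain hst'' | ⟨x, y, rfl, hsx, hyt⟩ := reachable_union_singleton_or (hfeas _ hst)
  · exact absurd hst'' hst'
  have hxyF : (graphOf F).Reachable x y :=
    reachable_of_mem_of_mem hf (Sym2.mem_mk_left x y) (Sym2.mem_mk_right x y)
  have hout : ∀ g ∈ S', g ≠ e₀ → (s ∉ midComp A e₀ g ∧ t ∉ midComp A e₀ g) ∧
      (x ∉ midComp A e₀ g ∧ y ∉ midComp A e₀ g) := fun g hg hge =>
    ⟨notMem_midComp_of_mem_cls hAtree.2.1 he₀ (hS' hg) hge (hFfeas _ hst) hst',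
      notMem_midComp_of_mem_cls hAtree.2.1 he₀ (hS' hg) hge hxyF
        fun hxy => hst' (hsx.trans (hxy.trans hyt))⟩
  have hxy : (graphOf ((A \ S') ∪ {s(x, y)})).Reachable x y :=
    reachable_of_mem_of_mem (Finset.mem_union_right _ (Finset.mem_singleton_self _))
      (Sym2.mem_mk_left x y) (Sym2.mem_mk_right x y)
  exact ((hlift hsx fun g hg hge => iff_of_false (hout g hg hge).1.1 (hout g hg hge).2.1).trans
    hxy).trans (hlift hyt fun g hg hge => iff_of_false (hout g hg hge).2.2 (hout g hg hge).1.2)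

theorem stmt7_class_all_or_nothing
    (T : Finset (V × V)) (A F : Finset (Sym2 V))
    (hAfeas : Feasible A T) (hFfeas : Feasible F T)
    (hAtree : IsTreeSol A) (hsupp : supp A = supp F)
    (e₀ : Sym2 V) (he₀ : e₀ ∈ A)
    (S : Finset (Sym2 V)) (hS : S = cls A F e₀)
    (f : Sym2 V) (hf : f ∈ F)
    (hfeas : Feasible (A.erase e₀ ∪ {f}) T) :
    ∀ S' ⊆ S, Feasible ((A \ S') ∪ {f}) T :=
  stmt7_class_all_or_nothing_general T A F hFfeas hAtree e₀ he₀ S hS f hf hfeas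
end

section
/- Let A be a feasible tree solution and F a feasible solution with V[A]=V[F], and let S ∈ 𝔖∖{S_u} be an equivalence class of safe edges lying on the minimal path P of A containing S, so that removing S decomposes A into components T_0,…,T_l in the order traversed by P. Then for every f ∈ F, either f crosses between T_0 and T_l, or both endpoints of f lie in a single component T_i. Consequently, for every f ∈ F, the unique cycle of A∪{f} either contains all of S or is disjoint from S (and this last consequence also holds for S = S_u). -/
open Finset

attribute [local instance] Classical.propDecidable

variable {V : Type*} [Fintype V] [DecidableEq V]

/-!
For an edge `e` of the tree path `p` from `u` to `v`, call the vertices reachable from `u` in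
`A ∖ {e}` the `u`-side of `e`. Along `p` these sides are nested, and for two edges `e ≠ e'` of `p`
the middle component `T_{e,e'}` consists exactly of the vertices lying on the `u`-side of one of
them but not of the other. Hence an `F`-edge `xy` that does not leave `T_{e₀,e}` is separated by
`e` if and only if it is separated by `e₀`: all of `S` lies on its fundamental cycle or none does.
If none does, the tree path from `x` to `y` avoids `S`; if all do, nestedness puts `x` on the
`u`-side and `y` on the far side of every edge of `S` (or the other way round), so `x` lies in the
component `T_0` of `u` and `y` in the component `T_l` of `v`. An unsafe edge lies on no
fundamental cycle at all.
-/

section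

variable {α : Type*}

namespace SimpleGraph

variable {G : SimpleGraph α}

lemma Walk.reachable_deleteEdges_or_exists_mem {z w : α} (W : G.Walk z w) (e : Sym2 α) :
    (G.deleteEdges {e}).Reachable z w ∨ ∃ t ∈ e, (G.deleteEdges {e}).Reachable z t := by
  induction W with
  | nil => exact Or.inl .rfl
  | @cons z z₁ w h W ih =>
    by_cases hz : z ∈ e
    · exact Or.inr ⟨z, hz, .rfl⟩
    have hadj : (G.deleteEdges {e}).Adj z z₁ :=
      deleteEdges_adj.mpr ⟨h, fun he => hz (Set.mem_singleton_iff.mp he ▸ Sym2.mem_mk_left z z₁)⟩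
    exact ih.imp hadj.reachable.trans fun ⟨t, ht, hr⟩ => ⟨t, ht, hadj.reachable.trans hr⟩

lemma reachable_deleteEdges_of_mem_of_ne {e e' : Sym2 α} (he : e ∈ G.edgeSet) (hne : e ≠ e')
    {t t' : α} (ht : t ∈ e) (ht' : t' ∈ e) : (G.deleteEdges {e'}).Reachable t t' := by
  have he : e ∈ (G.deleteEdges {e'}).edgeSet := by
    rw [edgeSet_deleteEdges]; exact ⟨he, hne⟩
  obtain ⟨a, b⟩ := e
  have hab : (G.deleteEdges {e'}).Adj a b := he
  rcases Sym2.mem_iff.mp ht with rfl | rfl <;> rcases Sym2.mem_iff.mp ht' with rfl | rfl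
  exacts [.rfl, hab.reachable, hab.reachable.symm, .rfl]

lemma reachable_deleteEdges_of_forall_not_reachable {u w : α} {e e' : Sym2 α}
    (he' : ∀ t ∈ e', ¬ (G.deleteEdges {e}).Reachable u t)
    (h : (G.deleteEdges {e}).Reachable u w) : (G.deleteEdges {e'}).Reachable u w := by
  obtain ⟨W⟩ := h
  rcases W.reachable_deleteEdges_or_exists_mem e' with h | ⟨t, ht, h⟩
  · rw [deleteEdges_deleteEdges] at h
    exact h.mono (deleteEdges_anti Set.subset_union_right)
  · exact absurd (h.mono (deleteEdges_le _)) (he' t ht)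

namespace IsAcyclic

lemma not_reachable_deleteEdges_of_mem_edges (hG : G.IsAcyclic) {x y : α} {q : G.Walk x y}
    (hq : q.IsPath) {e : Sym2 α} (he : e ∈ q.edges) : ¬ (G.deleteEdges {e}).Reachable x y := by
  classical
  obtain ⟨a, b⟩ := e
  rw [reachable_deleteEdges_iff_exists_walk]
  rintro ⟨r, hr⟩
  have hrq : r.bypass = q :=
    congrArg Subtype.val ((hG.subsingleton_path _ _).elim ⟨r.bypass, r.bypass_isPath⟩ ⟨q, hq⟩)
  exact hr (r.edges_bypass_subset_edges (hrq ▸ he))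

lemma reachable_deleteEdges_of_forall (hG : G.IsAcyclic) {x y : α} {s : Set (Sym2 α)}
    (h : G.Reachable x y) (hs : ∀ e ∈ s, (G.deleteEdges {e}).Reachable x y) :
    (G.deleteEdges s).Reachable x y := by
  classical
  obtain ⟨q⟩ := h
  exact ⟨q.bypass.toDeleteEdges s fun e he hes =>
    hG.not_reachable_deleteEdges_of_mem_edges q.bypass_isPath he (hs e hes)⟩

variable {u v : α} {p : G.Walk u v}

lemma exists_eq_mk_reachable_deleteEdges (hG : G.IsAcyclic) (hp : p.IsPath) {e : Sym2 α}
    (he : e ∈ p.edges) : ∃ a b, e = s(a, b) ∧ (G.deleteEdges {e}).Reachable u a ∧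
      (G.deleteEdges {e}).Reachable b v := by
  have huv := hG.not_reachable_deleteEdges_of_mem_edges hp he
  obtain ⟨a, ha, hua⟩ := (p.reachable_deleteEdges_or_exists_mem e).resolve_left huv
  obtain ⟨b, hb, hvb⟩ :=
    (p.reverse.reachable_deleteEdges_or_exists_mem e).resolve_left fun h => huv h.symm
  have hab : a ≠ b := by rintro rfl; exact huv (hua.trans hvb.symm)
  exact ⟨a, b, ((Sym2.mem_and_mem_iff hab).mp ⟨ha, hb⟩), hua, hvb.symm⟩

lemma reachable_deleteEdges_or_reachable_deleteEdges (hG : G.IsAcyclic) (hp : p.IsPath)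
    {e : Sym2 α} (he : e ∈ p.edges) {w : α} (hw : G.Reachable u w) :
    (G.deleteEdges {e}).Reachable u w ∨ (G.deleteEdges {e}).Reachable w v := by
  obtain ⟨a, b, rfl, hua, hbv⟩ := hG.exists_eq_mk_reachable_deleteEdges hp he
  obtain ⟨W⟩ := hw.symm
  rcases W.reachable_deleteEdges_or_exists_mem s(a, b) with h | ⟨t, ht, h⟩
  · exact Or.inl h.symm
  · rcases Sym2.mem_iff.mp ht with rfl | rfl
    exacts [Or.inl (hua.trans h.symm), Or.inr (h.trans hbv)]

lemma reachable_deleteEdges_iff (hG : G.IsAcyclic) (hp : p.IsPath) {e : Sym2 α}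
    (he : e ∈ p.edges) {x y : α} (hx : G.Reachable u x) (hy : G.Reachable u y) :
    (G.deleteEdges {e}).Reachable x y ↔
      ((G.deleteEdges {e}).Reachable u x ↔ (G.deleteEdges {e}).Reachable u y) := by
  refine ⟨fun h => ⟨(·.trans h), (·.trans h.symm)⟩, fun h => ?_⟩
  have huv := hG.not_reachable_deleteEdges_of_mem_edges hp he
  rcases hG.reachable_deleteEdges_or_reachable_deleteEdges hp he hx with hx' | hx'
  · exact hx'.symm.trans (h.mp hx')
  rcases hG.reachable_deleteEdges_or_reachable_deleteEdges hp he hy with hy' | hy'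
  · exact absurd ((h.mpr hy').trans hx') huv
  · exact hx'.trans hy'.symm

/-- The edges of `p` are linearly ordered: of two of them, one lies entirely beyond the other
as seen from `u`. -/
lemma forall_not_reachable_deleteEdges_or (hG : G.IsAcyclic) (hp : p.IsPath) {e e' : Sym2 α}
    (he : e ∈ p.edges) (he' : e' ∈ p.edges) (hne : e ≠ e') :
    (∀ t ∈ e', ¬ (G.deleteEdges {e}).Reachable u t) ∨
      ∀ t ∈ e, ¬ (G.deleteEdges {e'}).Reachable u t := by
  by_contra! ⟨⟨t', ht', hut'⟩, ⟨t, ht, hut⟩⟩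
  obtain ⟨a, b, rfl, -, hbv⟩ := hG.exists_eq_mk_reachable_deleteEdges hp he
  have hub : (G.deleteEdges {e'}).Reachable u b :=
    hut.trans (reachable_deleteEdges_of_mem_of_ne (p.edges_subset_edgeSet he) hne ht
      (Sym2.mem_mk_right a b))
  obtain ⟨W⟩ := hbv
  rcases W.reachable_deleteEdges_or_exists_mem e' with h | ⟨s, hs, h⟩
  · rw [deleteEdges_deleteEdges] at h
    exact hG.not_reachable_deleteEdges_of_mem_edges hp he'
      (hub.trans (h.mono (deleteEdges_anti Set.subset_union_right)))
  · have hus : (G.deleteEdges {s(a, b)}).Reachable u s :=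
      hut'.trans (reachable_deleteEdges_of_mem_of_ne (p.edges_subset_edgeSet he') hne.symm ht' hs)
    exact hG.not_reachable_deleteEdges_of_mem_edges hp he
      (hus.trans ((h.mono (deleteEdges_le _)).symm.trans W.reachable))

lemma reachable_deleteEdges_mono_or (hG : G.IsAcyclic) (hp : p.IsPath) {e e' : Sym2 α}
    (he : e ∈ p.edges) (he' : e' ∈ p.edges) :
    (∀ w, (G.deleteEdges {e}).Reachable u w → (G.deleteEdges {e'}).Reachable u w) ∨
      ∀ w, (G.deleteEdges {e'}).Reachable u w → (G.deleteEdges {e}).Reachable u w := by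
  obtain rfl | hne := eq_or_ne e e'
  · exact Or.inl fun _ => id
  exact (hG.forall_not_reachable_deleteEdges_or hp he he' hne).imp
    (fun h _ => reachable_deleteEdges_of_forall_not_reachable h)
    (fun h _ => reachable_deleteEdges_of_forall_not_reachable h)

lemma reachable_deleteEdges_of_separated (hG : G.IsAcyclic) (hp : p.IsPath) {S : Set (Sym2 α)}
    (hS : ∀ e ∈ S, e ∈ p.edges) {e₀ : Sym2 α} (he₀ : e₀ ∈ p.edges) {x y : α}
    (hx : G.Reachable u x) (hy : G.Reachable u y) (hx₀ : (G.deleteEdges {e₀}).Reachable u x)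
    (hy₀ : ¬ (G.deleteEdges {e₀}).Reachable u y)
    (hsep : ∀ e ∈ S, ¬ (G.deleteEdges {e}).Reachable x y) :
    (G.deleteEdges S).Reachable u x ∧ (G.deleteEdges S).Reachable v y := by
  have hside : ∀ e ∈ S,
      (G.deleteEdges {e}).Reachable u x ∧ ¬ (G.deleteEdges {e}).Reachable u y := by
    intro e he
    have hxy := (hG.reachable_deleteEdges_iff hp (hS e he) hx hy).not.mp (hsep e he)
    rcases hG.reachable_deleteEdges_mono_or hp (hS e he) he₀ with h | h
    · have := mt (h y) hy₀; tauto
    · have := h x hx₀; tauto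
  refine ⟨hG.reachable_deleteEdges_of_forall hx fun e he => (hside e he).1,
    hG.reachable_deleteEdges_of_forall (p.reachable.symm.trans hy) fun e he => ?_⟩
  exact ((hG.reachable_deleteEdges_or_reachable_deleteEdges hp (hS e he) hy).resolve_left
    (hside e he).2).symm

lemma reachable_deleteEdges_ends_or_reachable_deleteEdges (hG : G.IsAcyclic) (hp : p.IsPath)
    {S : Set (Sym2 α)} (hS : ∀ e ∈ S, e ∈ p.edges) {e₀ : Sym2 α} (he₀ : e₀ ∈ p.edges) {x y : α}
    (hx : G.Reachable u x) (hy : G.Reachable u y)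
    (hsep : ∀ e ∈ S, (G.deleteEdges {e}).Reachable x y ↔ (G.deleteEdges {e₀}).Reachable x y) :
    ((G.deleteEdges S).Reachable u x ∧ (G.deleteEdges S).Reachable v y ∨
      (G.deleteEdges S).Reachable u y ∧ (G.deleteEdges S).Reachable v x) ∨
      (G.deleteEdges S).Reachable x y := by
  by_cases h₀ : (G.deleteEdges {e₀}).Reachable x y
  · exact Or.inr (hG.reachable_deleteEdges_of_forall (hx.symm.trans hy) fun e he =>
      (hsep e he).mpr h₀)
  have hsep' : ∀ e ∈ S, ¬ (G.deleteEdges {e}).Reachable x y := fun e he => (hsep e he).not.mpr h₀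
  rw [hG.reachable_deleteEdges_iff hp he₀ hx hy] at h₀
  by_cases hx₀ : (G.deleteEdges {e₀}).Reachable u x
  · refine Or.inl (Or.inl ?_)
    exact hG.reachable_deleteEdges_of_separated hp hS he₀ hx hy hx₀ (by tauto) hsep'
  · refine Or.inl (Or.inr ?_)
    exact hG.reachable_deleteEdges_of_separated hp hS he₀ hy hx (by tauto) hx₀
      fun e he h => hsep' e he h.symm

end IsAcyclic

end SimpleGraph

open SimpleGraph

lemma graphOf_sdiff [DecidableEq α] (A B : Finset (Sym2 α)) :
    graphOf (A \ B) = (graphOf A).deleteEdges ↑B := by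
  ext x y
  simp [graphOf, and_assoc]

lemma graphOf_erase_s8 [DecidableEq α] (A : Finset (Sym2 α)) (e : Sym2 α) :
    graphOf (A.erase e) = (graphOf A).deleteEdges {e} := by
  rw [← Finset.sdiff_singleton_eq_erase, graphOf_sdiff, Finset.coe_singleton]

lemma start_mem_supp_of_mem_edges {A : Finset (Sym2 α)} {u v : α}
    {p : (graphOf A).Walk u v} {e : Sym2 α} (he : e ∈ p.edges) : u ∈ supp A := by
  cases p with
  | nil => simp at he
  | cons h _ => exact ⟨_, h.2, Sym2.mem_mk_left _ _⟩

lemma midComp_comm [DecidableEq α] (A : Finset (Sym2 α)) (e f : Sym2 α) :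
    midComp A e f = midComp A f e := by
  ext w
  simp only [midComp, Finset.pair_comm e f, Set.mem_ofPred_eq]
  exact ⟨fun ⟨x, hx, y, hy, hxy, hxw⟩ => ⟨y, hy, x, hx, hxy.symm, hxy.symm.trans hxw⟩,
    fun ⟨x, hx, y, hy, hxy, hxw⟩ => ⟨y, hy, x, hx, hxy.symm, hxy.symm.trans hxw⟩⟩

lemma mem_midComp_iff [DecidableEq α] {A : Finset (Sym2 α)} (hG : (graphOf A).IsAcyclic)
    {u v : α} {p : (graphOf A).Walk u v} (hp : p.IsPath) {e e' : Sym2 α} (he : e ∈ p.edges)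
    (he' : e' ∈ p.edges) (hne : e ≠ e') {w : α} (hw : (graphOf A).Reachable u w) :
    w ∈ midComp A e e' ↔ (((graphOf A).deleteEdges {e}).Reachable u w ↔
      ¬ ((graphOf A).deleteEdges {e'}).Reachable u w) := by
  wlog hlt : ∀ t ∈ e', ¬ ((graphOf A).deleteEdges {e}).Reachable u t generalizing e e'
  · rw [midComp_comm, this he' he hne.symm
      ((hG.forall_not_reachable_deleteEdges_or hp he he' hne).resolve_left hlt)]
    tauto
  set G := graphOf A
  have hmono : ∀ w, (G.deleteEdges {e}).Reachable u w → (G.deleteEdges {e'}).Reachable u w :=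
    fun _ => reachable_deleteEdges_of_forall_not_reachable hlt
  obtain ⟨a, b, rfl, hua, hbv⟩ := hG.exists_eq_mk_reachable_deleteEdges hp he
  obtain ⟨a', b', rfl, hua', -⟩ := hG.exists_eq_mk_reachable_deleteEdges hp he'
  have hub : ¬ (G.deleteEdges {s(a, b)}).Reachable u b := fun h =>
    hG.not_reachable_deleteEdges_of_mem_edges hp he (h.trans hbv)
  have hub' : (G.deleteEdges {s(a', b')}).Reachable u b :=
    (hmono a hua).trans (reachable_deleteEdges_of_mem_of_ne (Walk.edges_subset_edgeSet _ he)
      hne (Sym2.mem_mk_left a b) (Sym2.mem_mk_right a b))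
  simp only [midComp, graphOf_sdiff, Finset.coe_insert, Finset.coe_singleton, Set.mem_ofPred_eq]
  constructor
  · rintro ⟨t, ht, t', ht', htt', htw⟩
    have h₁ : ¬ (G.deleteEdges {s(a, b)}).Reachable u w := fun h =>
      hlt t' ht' (h.trans ((htt'.symm.trans htw).symm.mono (deleteEdges_anti (by simp))))
    have h₂ : (G.deleteEdges {s(a', b')}).Reachable u w := by
      refine Reachable.trans ?_ (htw.mono (deleteEdges_anti (by simp)))
      rcases Sym2.mem_iff.mp ht with rfl | rfl
      exacts [hmono _ hua, hub']
    tauto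
  · intro h
    have h₁ : ¬ (G.deleteEdges {s(a, b)}).Reachable u w := fun h₁ => h.mp h₁ (hmono w h₁)
    have hbG : G.Reachable u b := hub'.mono (deleteEdges_le _)
    have hb : ∀ z, G.Reachable u z → ¬ (G.deleteEdges {s(a, b)}).Reachable u z →
        (G.deleteEdges {s(a', b')}).Reachable u z →
        (G.deleteEdges {s(a, b), s(a', b')}).Reachable b z := by
      intro z hz h₁ h₂
      refine hG.reachable_deleteEdges_of_forall (hbG.symm.trans hz) ?_
      simp only [Set.mem_insert_iff, Set.mem_singleton_iff, forall_eq_or_imp, forall_eq]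
      exact ⟨(hG.reachable_deleteEdges_iff hp he hbG hz).mpr (iff_of_false hub h₁),
        (hG.reachable_deleteEdges_iff hp he' hbG hz).mpr (iff_of_true hub' h₂)⟩
    exact ⟨b, Sym2.mem_mk_right a b, a', Sym2.mem_mk_left a' b',
      hb a' (hua'.mono (deleteEdges_le _)) (hlt a' (Sym2.mem_mk_left a' b')) hua',
      hb w hw h₁ (by tauto)⟩

lemma Compatible.reachable_deleteEdges_iff [DecidableEq α] {A F : Finset (Sym2 α)}
    {e₀ e : Sym2 α}
    (hc : Compatible A F e₀ e) (hG : (graphOf A).IsAcyclic) {u v : α}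
    {p : (graphOf A).Walk u v} (hp : p.IsPath) (he₀ : e₀ ∈ p.edges) (he : e ∈ p.edges)
    {x y : α} (hf : s(x, y) ∈ F) (hx : (graphOf A).Reachable u x)
    (hy : (graphOf A).Reachable u y) :
    ((graphOf A).deleteEdges {e}).Reachable x y ↔
      ((graphOf A).deleteEdges {e₀}).Reachable x y := by
  obtain rfl | hne := eq_or_ne e₀ e
  · rfl
  have hmid : x ∈ midComp A e₀ e ↔ y ∈ midComp A e₀ e := by
    have hc := hc.resolve_left hne
    exact ⟨fun hxm => by_contra fun hym => hc ⟨_, hf, x, y, rfl, hxm, hym⟩,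
      fun hym => by_contra fun hxm => hc ⟨_, hf, y, x, Sym2.eq_swap, hym, hxm⟩⟩
  rw [mem_midComp_iff hG hp he₀ he hne hx, mem_midComp_iff hG hp he₀ he hne hy] at hmid
  rw [hG.reachable_deleteEdges_iff hp he hx hy, hG.reachable_deleteEdges_iff hp he₀ hx hy]
  tauto

lemma onFundCycle_mk_iff [DecidableEq α] {A : Finset (Sym2 α)} {x y : α} {e : Sym2 α}
    (hxy : (graphOf A).Reachable x y) :
    onFundCycle A s(x, y) e ↔ e ∈ A ∧ ¬ ((graphOf A).deleteEdges {e}).Reachable x y := by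
  rw [onFundCycle, graphOf_erase_s8]
  refine and_congr_right fun _ => ⟨fun h => (h x y rfl).2, fun h x' y' hxy' => ?_⟩
  rcases Sym2.eq_iff.mp hxy' with ⟨rfl, rfl⟩ | ⟨rfl, rfl⟩
  exacts [⟨hxy, h⟩, ⟨hxy.symm, fun h' => h h'.symm⟩]

lemma not_onFundCycle_of_not_safe [DecidableEq α] {A F : Finset (Sym2 α)} {e f : Sym2 α}
    (he : ¬ Safe A F e) (hf : f ∈ F) : ¬ onFundCycle A f e := by
  obtain ⟨x, y⟩ := f
  intro h
  have hxy := (h.2 x y rfl).2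
  exact he ⟨s(x, y), hf, x, y, rfl, fun hxy' => hxy (hxy' ▸ .rfl), hxy⟩

end

theorem stmt8_no_F_edges_between_inner_general
    (A F : Finset (Sym2 V))
    (hAtree : IsTreeSol A) (hsupp : supp A = supp F)
    (e₀ : Sym2 V) (he₀ : e₀ ∈ A)
    (S : Finset (Sym2 V)) (hS : S = cls A F e₀)
    (u v : V) (p : (graphOf A).Walk u v) (hp : p.IsPath)
    (hSp : ∀ e ∈ S, e ∈ p.edges) :
    (∀ f ∈ F,
      (∃ x y : V, f = s(x, y) ∧
        ((graphOf (A \ S)).Reachable u x ∧ (graphOf (A \ S)).Reachable v y ∨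
         (graphOf (A \ S)).Reachable u y ∧ (graphOf (A \ S)).Reachable v x)) ∨
      (∀ x y : V, f = s(x, y) → (graphOf (A \ S)).Reachable x y)) ∧
    (∀ f ∈ F, (∀ e ∈ S, onFundCycle A f e) ∨ ∀ e ∈ S, ¬ onFundCycle A f e) ∧
    (∀ f ∈ F, (∀ e ∈ unsafeCls A F, onFundCycle A f e) ∨
      ∀ e ∈ unsafeCls A F, ¬ onFundCycle A f e) := by
  obtain ⟨-, hG, hconn⟩ := hAtree
  subst hS
  have he₀p : e₀ ∈ p.edges := hSp e₀ (mem_filter.mpr ⟨he₀, Or.inl rfl⟩)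
  have hu : u ∈ supp A := start_mem_supp_of_mem_edges he₀p
  have hreach : ∀ {x y}, s(x, y) ∈ F → (graphOf A).Reachable u x ∧ (graphOf A).Reachable u y :=
    fun hf => ⟨hconn u hu _ (hsupp ▸ ⟨_, hf, Sym2.mem_mk_left _ _⟩),
      hconn u hu _ (hsupp ▸ ⟨_, hf, Sym2.mem_mk_right _ _⟩)⟩
  have hsep : ∀ {x y}, s(x, y) ∈ F → ∀ e ∈ cls A F e₀,
      ((graphOf A).deleteEdges {e}).Reachable x y ↔
        ((graphOf A).deleteEdges {e₀}).Reachable x y := fun hf e he =>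
    (mem_filter.mp he).2.reachable_deleteEdges_iff hG hp he₀p (hSp e he) hf (hreach hf).1
      (hreach hf).2
  refine ⟨fun f hf => ?_, fun f hf => ?_, fun f hf =>
    Or.inr fun e he => not_onFundCycle_of_not_safe (mem_filter.mp he).2 hf⟩
  · obtain ⟨x, y⟩ := f
    rw [graphOf_sdiff]
    refine (hG.reachable_deleteEdges_ends_or_reachable_deleteEdges hp hSp he₀p (hreach hf).1
      (hreach hf).2 (hsep hf)).imp (fun h => ⟨x, y, rfl, h⟩) fun h x' y' hxy => ?_
    rcases Sym2.eq_iff.mp hxy with ⟨rfl, rfl⟩ | ⟨rfl, rfl⟩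
    exacts [h, h.symm]
  · obtain ⟨x, y⟩ := f
    have hxy := (hreach hf).1.symm.trans (hreach hf).2
    by_cases h₀ : ((graphOf A).deleteEdges {e₀}).Reachable x y
    · exact Or.inr fun e he hcyc => ((onFundCycle_mk_iff hxy).mp hcyc).2 ((hsep hf e he).mpr h₀)
    · exact Or.inl fun e he => (onFundCycle_mk_iff hxy).mpr
        ⟨(mem_filter.mp he).1, fun h => h₀ ((hsep hf e he).mp h)⟩

theorem stmt8_no_F_edges_between_inner
    (T : Finset (V × V)) (A F : Finset (Sym2 V))
    (hAfeas : Feasible A T) (hFfeas : Feasible F T)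
    (hAtree : IsTreeSol A) (hsupp : supp A = supp F)
    (e₀ : Sym2 V) (he₀ : e₀ ∈ A)
    (S : Finset (Sym2 V)) (hS : S = cls A F e₀) (hSu : S ≠ unsafeCls A F)
    (u v : V) (p : (graphOf A).Walk u v) (hp : p.IsPath)
    (hSp : ∀ e ∈ S, e ∈ p.edges) :
    (∀ f ∈ F,
      (∃ x y : V, f = s(x, y) ∧
        ((graphOf (A \ S)).Reachable u x ∧ (graphOf (A \ S)).Reachable v y ∨
         (graphOf (A \ S)).Reachable u y ∧ (graphOf (A \ S)).Reachable v x)) ∨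
      (∀ x y : V, f = s(x, y) → (graphOf (A \ S)).Reachable x y)) ∧
    (∀ f ∈ F, (∀ e ∈ S, onFundCycle A f e) ∨ ∀ e ∈ S, ¬ onFundCycle A f e) ∧
    (∀ f ∈ F, (∀ e ∈ unsafeCls A F, onFundCycle A f e) ∨
      ∀ e ∈ unsafeCls A F, ¬ onFundCycle A f e) :=
  stmt8_no_F_edges_between_inner_general A F hAtree hsupp e₀ he₀ S hS u v p hp hSp
end
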